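/- Let ∇ be a Type B connection on M = (0,∞)×ℝ with C₁₂¹ = 0, C₂₂¹ = 0, C₂₂² = 0, and assume ε := (1 + C₁₁¹ − C₁₂²)C₁₂² ≠ 0 (so ∇ is not flat). Then a smooth function f on M is an affine gradient Ricci soliton for ∇ if and only if f(x¹,x²) = ξ(x¹) for a smooth function ξ of one variable satisfying (x¹)²ξ''(x¹) − C₁₁¹ x¹ ξ'(x¹) + ε = 0. -/

import Mathlib

noncomputable section

/-- The coordinate directions of ℝ². -/
def ee : Fin 2 → ℝ × ℝ := ![(1, 0), (0, 1)]

/-- Partial derivative `∂_i f`. -/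
def pd (i : Fin 2) (f : ℝ × ℝ → ℝ) : ℝ × ℝ → ℝ :=
  fun p => fderiv ℝ f p (ee i)

/-- The underlying manifold `M = (0,∞) × ℝ` of a Type B geometry. -/
def MB : Set (ℝ × ℝ) := {p | 0 < p.1}

/-- Christoffel symbols `Γ_{ij}^k = C_{ij}^k / x¹` of a Type B connection on `(0,∞)×ℝ`. -/
def GammaB (C : Fin 2 → Fin 2 → Fin 2 → ℝ) (i j k : Fin 2) : ℝ × ℝ → ℝ :=
  fun p => C i j k / p.1

/-- Ricci tensor of a Type B connection. -/
def ricciB (C : Fin 2 → Fin 2 → Fin 2 → ℝ) (j k : Fin 2) : ℝ × ℝ → ℝ :=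
  fun p => (∑ i, (pd i (GammaB C j k i) p - pd j (GammaB C i k i) p))
    + ∑ i, ∑ q, (GammaB C i q i p * GammaB C j k q p - GammaB C j q i p * GammaB C i k q p)

/-- Symmetrized Ricci tensor of a Type B connection. -/
def ricciSymB (C : Fin 2 → Fin 2 → Fin 2 → ℝ) (i j : Fin 2) : ℝ × ℝ → ℝ :=
  fun p => (ricciB C i j p + ricciB C j i p) / 2

/-- Hessian `H(f)_{ij} = ∂_i∂_j f − Σ_k Γ_{ij}^k ∂_k f` of a Type B connection. -/
def hessB (C : Fin 2 → Fin 2 → Fin 2 → ℝ) (f : ℝ × ℝ → ℝ) (i j : Fin 2) : ℝ × ℝ → ℝ :=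
  fun p => pd i (pd j f) p - ∑ k, GammaB C i j k p * pd k f p

/-- `f` is an affine gradient Ricci soliton for the Type B connection determined by `C`:
`H(f)_{ij} + ρ^s_{ij} = 0` on `M`. -/
def IsSolitonB (C : Fin 2 → Fin 2 → Fin 2 → ℝ) (f : ℝ × ℝ → ℝ) : Prop :=
  ∀ i j : Fin 2, ∀ p : ℝ × ℝ, 0 < p.1 → hessB C f i j p + ricciSymB C i j p = 0

/-! ### Auxiliary lemmas -/

lemma MB_open : IsOpen MB := isOpen_lt continuous_const continuous_fst

lemma MB_mem_nhds {p : ℝ × ℝ} (hp : 0 < p.1) : MB ∈ nhds p :=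
  MB_open.mem_nhds hp

lemma ee0_1 : (ee 0).1 = 1 := rfl
lemma ee1_1 : (ee 1).1 = 0 := rfl

lemma pd_congr {g h : ℝ × ℝ → ℝ} {p : ℝ × ℝ} (H : g =ᶠ[nhds p] h) (i : Fin 2) :
    pd i g p = pd i h p := by
  unfold pd; rw [H.fderiv_eq]

lemma pd_const (K : ℝ) (i : Fin 2) (p : ℝ × ℝ) : pd i (fun _ => K) p = 0 := by
  simp [pd]

lemma pd_comp_fst {u : ℝ → ℝ} {p : ℝ × ℝ} (hu : DifferentiableAt ℝ u p.1) (i : Fin 2) :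
    pd i (fun q : ℝ × ℝ => u q.1) p = deriv u p.1 * (ee i).1 := by
  have h : HasFDerivAt (fun q : ℝ × ℝ => u q.1)
      ((deriv u p.1) • ContinuousLinearMap.fst ℝ ℝ ℝ) p :=
    hu.hasDerivAt.comp_hasFDerivAt p (hasFDerivAt_fst)
  unfold pd
  rw [h.fderiv]
  simp [mul_comm]

lemma hasFDerivAt_inv_fst {p : ℝ × ℝ} (hp : p.1 ≠ 0) :
    HasFDerivAt (fun q : ℝ × ℝ => (q.1)⁻¹)
      ((-(p.1 ^ 2)⁻¹) • ContinuousLinearMap.fst ℝ ℝ ℝ) p :=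
  (hasDerivAt_inv hp).comp_hasFDerivAt p (hasFDerivAt_fst)

lemma diffAt_inv_fst {p : ℝ × ℝ} (hp : p.1 ≠ 0) :
    DifferentiableAt ℝ (fun q : ℝ × ℝ => (q.1)⁻¹) p :=
  (hasFDerivAt_inv_fst hp).differentiableAt

lemma diffAt_div_fst {g : ℝ × ℝ → ℝ} {p : ℝ × ℝ} (hg : DifferentiableAt ℝ g p)
    (hp : p.1 ≠ 0) : DifferentiableAt ℝ (fun q => g q / q.1) p := by
  simp_rw [div_eq_mul_inv]
  exact hg.mul (diffAt_inv_fst hp)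

/-- Quotient rule for `pd`, specialized to denominators `q.1`. -/
lemma pd_div_fst {g : ℝ × ℝ → ℝ} {p : ℝ × ℝ} (hp : p.1 ≠ 0)
    (hg : DifferentiableAt ℝ g p) (i : Fin 2) :
    pd i (fun q => g q / q.1) p = (p.1 * pd i g p - g p * (ee i).1) / p.1 ^ 2 := by
  have h : HasFDerivAt (fun q : ℝ × ℝ => g q / q.1)
      ((g p • ((-(p.1 ^ 2)⁻¹) • ContinuousLinearMap.fst ℝ ℝ ℝ)) + ((p.1)⁻¹ • fderiv ℝ g p)) p := by
    simpa only [div_eq_mul_inv, Pi.mul_def] using hg.hasFDerivAt.mul (hasFDerivAt_inv_fst hp)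
  unfold pd
  rw [h.fderiv]
  simp only [ContinuousLinearMap.add_apply, ContinuousLinearMap.smul_apply,
    ContinuousLinearMap.coe_fst', smul_eq_mul]
  field_simp
  ring

lemma pd_const_mul {g : ℝ × ℝ → ℝ} {p : ℝ × ℝ} (hg : DifferentiableAt ℝ g p) (K : ℝ)
    (i : Fin 2) : pd i (fun q => K * g q) p = K * pd i g p := by
  unfold pd
  rw [fderiv_const_mul hg]
  simp

lemma pd_add {A B : ℝ × ℝ → ℝ} {p : ℝ × ℝ} (hA : DifferentiableAt ℝ A p)
    (hB : DifferentiableAt ℝ B p) (i : Fin 2) :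
    pd i (fun q => A q + B q) p = pd i A p + pd i B p := by
  unfold pd
  rw [fderiv_fun_add hA hB]
  simp

lemma pd_sub {A B : ℝ × ℝ → ℝ} {p : ℝ × ℝ} (hA : DifferentiableAt ℝ A p)
    (hB : DifferentiableAt ℝ B p) (i : Fin 2) :
    pd i (fun q => A q - B q) p = pd i A p - pd i B p := by
  unfold pd
  rw [fderiv_fun_sub hA hB]
  simp

lemma contDiffAt_pd {g : ℝ × ℝ → ℝ} {p : ℝ × ℝ} (hg : ContDiffAt ℝ (⊤ : ℕ∞) g p) (i : Fin 2) :
    ContDiffAt ℝ (⊤ : ℕ∞) (pd i g) p := by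
  have h1 : ContDiffAt ℝ (⊤ : ℕ∞) (fderiv ℝ g) p := hg.fderiv_right (by simp)
  exact h1.clm_apply contDiffAt_const

lemma pd_comm {g : ℝ × ℝ → ℝ} {p : ℝ × ℝ} (hg : ContDiffAt ℝ (⊤ : ℕ∞) g p) (i j : Fin 2) :
    pd i (pd j g) p = pd j (pd i g) p := by
  have hsym : IsSymmSndFDerivAt ℝ g p := hg.isSymmSndFDerivAt (by rw [minSmoothness_of_isRCLikeNormedField]; exact WithTop.coe_le_coe.mpr (le_top : (2 : ℕ∞) ≤ ⊤))
  have hd : DifferentiableAt ℝ (fderiv ℝ g) p :=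
    (hg.fderiv_right (m := ((⊤ : ℕ∞) : WithTop ℕ∞)) (by simp)).differentiableAt (by simp)
  have key : ∀ v w : ℝ × ℝ, fderiv ℝ (fun q => fderiv ℝ g q v) p w
      = fderiv ℝ (fderiv ℝ g) p w v := by
    intro v w
    rw [fderiv_clm_apply hd (differentiableAt_const v)]
    simp
  show fderiv ℝ (fun q => fderiv ℝ g q (ee j)) p (ee i)
      = fderiv ℝ (fun q => fderiv ℝ g q (ee i)) p (ee j)
  rw [key, key, hsym.eq]

lemma pd_GammaB {C : Fin 2 → Fin 2 → Fin 2 → ℝ} {p : ℝ × ℝ} (hp : p.1 ≠ 0)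
    (l i j k : Fin 2) :
    pd l (GammaB C i j k) p = -(C i j k) * (ee l).1 / p.1 ^ 2 := by
  have h := pd_div_fst (g := fun _ => C i j k) hp (differentiableAt_const _) l
  have hz : pd l (fun _ : ℝ × ℝ => C i j k) p = 0 := by simp [pd]
  rw [show GammaB C i j k = fun q => (fun _ : ℝ × ℝ => C i j k) q / q.1 from rfl, h, hz]
  ring

lemma ricciSymB_vals (C : Fin 2 → Fin 2 → Fin 2 → ℝ)
    (hC : ∀ i j k, C i j k = C j i k)
    (h1 : C 0 1 0 = 0) (h2 : C 1 1 0 = 0) (h3 : C 1 1 1 = 0)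
    {p : ℝ × ℝ} (hp : 0 < p.1) :
    ricciSymB C 0 0 p = (1 + C 0 0 0 - C 0 1 1) * C 0 1 1 / p.1 ^ 2 ∧
    ricciSymB C 0 1 p = 0 ∧ ricciSymB C 1 0 p = 0 ∧ ricciSymB C 1 1 p = 0 := by
  have hx : p.1 ≠ 0 := hp.ne'
  have e1 : C 1 0 0 = 0 := (hC 1 0 0).trans h1
  have e2 : C 1 0 1 = C 0 1 1 := hC 1 0 1
  simp only [ricciSymB, ricciB, Fin.sum_univ_two, pd_GammaB hx, GammaB,
    ee0_1, ee1_1, e1, e2, h1, h2, h3]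
  refine ⟨?_, ?_, ?_, ?_⟩ <;> field_simp <;> ring

/-- Vertical line derivative. -/
lemma hasDerivAt_vert {f : ℝ × ℝ → ℝ} {x y : ℝ} (h : DifferentiableAt ℝ f (x, y)) :
    HasDerivAt (fun s => f (x, s)) (pd 1 f (x, y)) y := by
  have hc : HasDerivAt (fun s : ℝ => ((x, s) : ℝ × ℝ)) ((0 : ℝ), (1 : ℝ)) y :=
    (hasDerivAt_const y x).prodMk (hasDerivAt_id y)
  exact h.hasFDerivAt.comp_hasDerivAt y hc

/-- Horizontal line derivative. -/
lemma hasDerivAt_horiz {f : ℝ × ℝ → ℝ} {x y : ℝ} (h : DifferentiableAt ℝ f (x, y)) :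
    HasDerivAt (fun s => f (s, y)) (pd 0 f (x, y)) x := by
  have hc : HasDerivAt (fun s : ℝ => ((s, y) : ℝ × ℝ)) ((1 : ℝ), (0 : ℝ)) x :=
    (hasDerivAt_id x).prodMk (hasDerivAt_const x y)
  exact h.hasFDerivAt.comp_hasDerivAt x hc

/-- for a Type B connection with `C₁₂¹ = C₂₂¹ = C₂₂² = 0` and
`ε = (1 + C₁₁¹ − C₁₂²)C₁₂² ≠ 0`, a smooth function `f` on `M` is an affine gradient Ricci
soliton iff `f(x¹,x²) = ξ(x¹)` with `(x¹)²ξ'' − C₁₁¹ x¹ ξ' + ε = 0`. -/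
theorem stmt16 (C : Fin 2 → Fin 2 → Fin 2 → ℝ)
    (hC : ∀ i j k, C i j k = C j i k)
    (h1 : C 0 1 0 = 0) (h2 : C 1 1 0 = 0) (h3 : C 1 1 1 = 0)
    (hε : (1 + C 0 0 0 - C 0 1 1) * C 0 1 1 ≠ 0)
    (f : ℝ × ℝ → ℝ) (hf : ContDiffOn ℝ (⊤ : ℕ∞) f MB) :
    IsSolitonB C f ↔
      ∃ ξ : ℝ → ℝ, ContDiffOn ℝ (⊤ : ℕ∞) ξ (Set.Ioi 0) ∧
        (∀ t : ℝ, 0 < t →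
          t ^ 2 * deriv (deriv ξ) t - C 0 0 0 * t * deriv ξ t
            + (1 + C 0 0 0 - C 0 1 1) * C 0 1 1 = 0) ∧
        (∀ p : ℝ × ℝ, 0 < p.1 → f p = ξ p.1) := by
  set a := C 0 0 0 with ha
  set b := C 0 0 1 with hb
  set c := C 0 1 1 with hc'
  set ε := (1 + a - c) * c with hε'
  constructor
  · -- Forward direction
    intro hs
    have hCd : ∀ p : ℝ × ℝ, 0 < p.1 → ContDiffAt ℝ (⊤ : ℕ∞) f p :=
      fun p hp => hf.contDiffAt (MB_mem_nhds hp)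
    have hfd : ∀ p : ℝ × ℝ, 0 < p.1 → DifferentiableAt ℝ f p :=
      fun p hp => (hCd p hp).differentiableAt (by simp)
    -- the three soliton equations
    have E11 : ∀ p : ℝ × ℝ, 0 < p.1 → pd 1 (pd 1 f) p = 0 := by
      intro p hp
      have h := hs 1 1 p hp
      rw [(ricciSymB_vals C hC h1 h2 h3 hp).2.2.2] at h
      have hx : p.1 ≠ 0 := hp.ne'
      simp only [hessB, Fin.sum_univ_two, GammaB, h2, h3] at h
      simpa using h
    have E01 : ∀ p : ℝ × ℝ, 0 < p.1 →
        pd 0 (pd 1 f) p = (c * pd 1 f p) / p.1 := by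
      intro p hp
      have h := hs 0 1 p hp
      rw [(ricciSymB_vals C hC h1 h2 h3 hp).2.1] at h
      simp only [hessB, Fin.sum_univ_two, GammaB, h1, ← hc', zero_div, zero_mul, add_zero, zero_add] at h
      have hx : p.1 ≠ 0 := hp.ne'
      have hX : pd 0 (pd 1 f) p = c / p.1 * pd 1 f p := by linarith
      rw [hX]; ring
    have E00 : ∀ p : ℝ × ℝ, 0 < p.1 →
        pd 0 (pd 0 f) p = (a * pd 0 f p + b * pd 1 f p - ε / p.1) / p.1 := by
      intro p hp
      have h := hs 0 0 p hp
      rw [(ricciSymB_vals C hC h1 h2 h3 hp).1] at h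
      simp only [hessB, Fin.sum_univ_two, GammaB, ← ha, ← hb, ← hc', ← hε'] at h
      have hx : p.1 ≠ 0 := hp.ne'
      have hX : pd 0 (pd 0 f) p
          = a / p.1 * pd 0 f p + b / p.1 * pd 1 f p - ε / p.1 ^ 2 := by linarith
      rw [hX]; field_simp
    set g := pd 1 f with hg
    set u := pd 0 f with hu
    have hgC : ∀ p : ℝ × ℝ, 0 < p.1 → ContDiffAt ℝ (⊤ : ℕ∞) g p :=
      fun p hp => contDiffAt_pd (hCd p hp) 1
    have huC : ∀ p : ℝ × ℝ, 0 < p.1 → ContDiffAt ℝ (⊤ : ℕ∞) u p :=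
      fun p hp => contDiffAt_pd (hCd p hp) 0
    have hgd : ∀ p : ℝ × ℝ, 0 < p.1 → DifferentiableAt ℝ g p :=
      fun p hp => (hgC p hp).differentiableAt (by simp)
    have hud : ∀ p : ℝ × ℝ, 0 < p.1 → DifferentiableAt ℝ u p :=
      fun p hp => (huC p hp).differentiableAt (by simp)
    -- g = 0 on M
    have hg0 : ∀ p : ℝ × ℝ, 0 < p.1 → g p = 0 := by
      intro p hp
      have hx : p.1 ≠ 0 := hp.ne'
      -- first expression for pd 0 (pd 0 g) p
      have hev : pd 0 g =ᶠ[nhds p] fun q => (c * g q) / q.1 := by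
        filter_upwards [MB_mem_nhds hp] with q hq
        exact E01 q hq
      have eqA : pd 0 (pd 0 g) p
          = (p.1 * (c * pd 0 g p) - (c * g p) * 1) / p.1 ^ 2 := by
        rw [pd_congr hev 0, pd_div_fst hx ((hgd p hp).const_mul c) 0,
          pd_const_mul (hgd p hp) c 0, ee0_1]
      -- second expression, by differentiating E00 in the y-direction
      have hswap : ∀ q : ℝ × ℝ, 0 < q.1 → pd 1 u q = pd 0 g q :=
        fun q hq => pd_comm (hCd q hq) 1 0
      have hevu : pd 0 u =ᶠ[nhds p]
          fun q => (a * u q + b * g q - ε / q.1) / q.1 := by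
        filter_upwards [MB_mem_nhds hp] with q hq
        exact E00 q hq
      have dnum : DifferentiableAt ℝ (fun q : ℝ × ℝ => a * u q + b * g q - ε / q.1) p :=
        (((hud p hp).const_mul a).add ((hgd p hp).const_mul b)).sub
          (diffAt_div_fst (differentiableAt_const ε) hx)
      have pd1num : pd 1 (fun q : ℝ × ℝ => a * u q + b * g q - ε / q.1) p
          = a * pd 0 g p := by
        rw [pd_sub (A := fun q => a * u q + b * g q) (((hud p hp).const_mul a).add ((hgd p hp).const_mul b))
            (diffAt_div_fst (differentiableAt_const ε) hx) 1,
          pd_add ((hud p hp).const_mul a) ((hgd p hp).const_mul b) 1,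
          pd_const_mul (hud p hp) a 1, pd_const_mul (hgd p hp) b 1,
          pd_div_fst hx (differentiableAt_const ε) 1,
          pd_const ε 1 p, hswap p hp, E11 p hp, ee1_1]
        ring
      have eqB : pd 0 (pd 0 g) p = a * pd 0 g p / p.1 := by
        have s1 : pd 1 (pd 0 u) p = pd 0 (pd 1 u) p := pd_comm (huC p hp) 1 0
        have s2 : pd 0 (pd 1 u) p = pd 0 (pd 0 g) p := by
          apply pd_congr _ 0
          filter_upwards [MB_mem_nhds hp] with q hq
          exact hswap q hq
        have s3 : pd 1 (pd 0 u) p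
            = pd 1 (fun q => (a * u q + b * g q - ε / q.1) / q.1) p :=
          pd_congr hevu 1
        rw [← s2, ← s1, s3, pd_div_fst hx dnum 1, pd1num, ee1_1]
        field_simp
        ring
      -- combine
      have e01 := E01 p hp
      have t1 : pd 0 (pd 0 g) p = (c * c * g p - c * g p) / p.1 ^ 2 := by
        rw [eqA, e01]; field_simp
      have t2 : pd 0 (pd 0 g) p = a * c * g p / p.1 ^ 2 := by
        rw [eqB, e01]; field_simp
      have h12 := t1.symm.trans t2
      have t4 : c * c * g p - c * g p = a * c * g p := by
        field_simp at h12
        linear_combination h12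
      have key : ε * g p = 0 := by
        rw [hε']
        linear_combination (-1 : ℝ) * t4
      rcases mul_eq_zero.1 key with h | h
      · exact absurd h hε
      · exact h
    -- f is constant in the second variable
    have hconst : ∀ p : ℝ × ℝ, 0 < p.1 → f p = f (p.1, 0) := by
      intro p hp
      have key : ∀ y : ℝ, HasDerivAt (fun s => f (p.1, s)) (g (p.1, y)) y :=
        fun y => hasDerivAt_vert (hfd (p.1, y) hp)
      have hdiff : Differentiable ℝ (fun s => f (p.1, s)) :=
        fun y => (key y).differentiableAt
      have hder : ∀ y : ℝ, deriv (fun s => f (p.1, s)) y = 0 :=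
        fun y => (key y).deriv.trans (hg0 (p.1, y) hp)
      have := is_const_of_deriv_eq_zero hdiff hder p.2 0
      simpa using this
    refine ⟨fun t => f (t, 0), ?_, ?_, fun p hp => hconst p hp⟩
    · exact hf.comp ((contDiff_id.prodMk contDiff_const).contDiffOn)
        (fun t ht => ht)
    · intro t ht
      have hx : t ≠ 0 := ht.ne'
      set ξ : ℝ → ℝ := fun t => f (t, 0) with hξ
      have hder1 : ∀ s : ℝ, 0 < s → HasDerivAt ξ (u (s, 0)) s :=
        fun s hs => hasDerivAt_horiz (hfd (s, 0) hs)
      have hd1 : deriv ξ t = u (t, 0) := (hder1 t ht).deriv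
      have hev : deriv ξ =ᶠ[nhds t] fun s => u (s, 0) := by
        filter_upwards [isOpen_Ioi.mem_nhds ht] with s hs
        exact (hder1 s hs).deriv
      have hd2 : deriv (deriv ξ) t = pd 0 u (t, 0) := by
        rw [hev.deriv_eq]
        exact (hasDerivAt_horiz ((contDiffAt_pd (hCd (t, 0) ht) 0).differentiableAt
          (by simp))).deriv
      have e00 := E00 (t, 0) ht
      have hgz := hg0 (t, 0) ht
      rw [hd2, hd1]
      rw [hu] at e00 ⊢
      rw [hgz] at e00
      simp only at e00 ⊢
      rw [e00]
      field_simp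
      ring
  · -- Backward direction
    rintro ⟨ξ, hξ, hode, hfe⟩ i j p hp
    have hx : p.1 ≠ 0 := hp.ne'
    have hξd : ∀ s : ℝ, 0 < s → DifferentiableAt ℝ ξ s :=
      fun s hs => (hξ.contDiffAt (isOpen_Ioi.mem_nhds hs)).differentiableAt (by simp)
    have hdξC : ContDiffOn ℝ (⊤ : ℕ∞) (deriv ξ) (Set.Ioi 0) :=
      hξ.deriv_of_isOpen isOpen_Ioi (by simp)
    have hdξd : DifferentiableAt ℝ (deriv ξ) p.1 :=
      (hdξC.contDiffAt (isOpen_Ioi.mem_nhds hp)).differentiableAt (by simp)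
    -- first derivatives of f on M
    have hpd0 : ∀ q : ℝ × ℝ, 0 < q.1 → pd 0 f q = deriv ξ q.1 := by
      intro q hq
      have hev : f =ᶠ[nhds q] fun r => ξ r.1 := by
        filter_upwards [MB_mem_nhds hq] with r hr
        exact hfe r hr
      rw [pd_congr hev 0, pd_comp_fst (hξd q.1 hq) 0, ee0_1, mul_one]
    have hpd1 : ∀ q : ℝ × ℝ, 0 < q.1 → pd 1 f q = 0 := by
      intro q hq
      have hev : f =ᶠ[nhds q] fun r => ξ r.1 := by
        filter_upwards [MB_mem_nhds hq] with r hr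
        exact hfe r hr
      rw [pd_congr hev 1, pd_comp_fst (hξd q.1 hq) 1, ee1_1, mul_zero]
    -- second derivatives at p
    have hev0 : pd 0 f =ᶠ[nhds p] fun q => deriv ξ q.1 := by
      filter_upwards [MB_mem_nhds hp] with q hq
      exact hpd0 q hq
    have hev1 : pd 1 f =ᶠ[nhds p] fun _ => (0 : ℝ) := by
      filter_upwards [MB_mem_nhds hp] with q hq
      exact hpd1 q hq
    have hp00 : pd 0 (pd 0 f) p = deriv (deriv ξ) p.1 := by
      rw [pd_congr hev0 0, pd_comp_fst hdξd 0, ee0_1, mul_one]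
    have hp10 : pd 1 (pd 0 f) p = 0 := by
      rw [pd_congr hev0 1, pd_comp_fst hdξd 1, ee1_1, mul_zero]
    have hp01 : pd 0 (pd 1 f) p = 0 := by
      rw [pd_congr hev1 0, pd_const]
    have hp11 : pd 1 (pd 1 f) p = 0 := by
      rw [pd_congr hev1 1, pd_const]
    have hric := ricciSymB_vals C hC h1 h2 h3 hp
    have e1 : C 1 0 0 = 0 := (hC 1 0 0).trans h1
    have e2 : C 1 0 1 = c := hC 1 0 1
    have hode' := hode p.1 hp
    fin_cases i <;> fin_cases j <;>
      simp only [hessB, Fin.sum_univ_two, GammaB, Fin.zero_eta, Fin.mk_one, Fin.isValue] <;>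
      [skip; skip; skip; skip]
    · rw [hp00, hric.1, hpd0 p hp, hpd1 p hp, ← ha, ← hb]
      field_simp
      rw [hε', hc'] at hode'
      linear_combination hode'
    · rw [hp01, hric.2.1, hpd0 p hp, hpd1 p hp, h1, ← hc']
      ring
    · rw [hp10, hric.2.2.1, hpd0 p hp, hpd1 p hp, e1, e2]
      ring
    · rw [hp11, hric.2.2.2, hpd0 p hp, hpd1 p hp, h2, h3]
      ring
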